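/- arXiv:2311.01351 — 2 statements merged into one kernel-verified Lean document; each statement's English description precedes it below -/
import Mathlib

section
/- Alive agents in histories of the canonical model: let h be a history of the canonical pseudo-model Mc of SC, and let Γ = last(h). Then, in the unravelling U(Mc), agent a is alive in h (i.e., h ∼^U_a h) if and only if alive_a ∈ Γ. -/
attribute [local instance] Classical.propDecidable

noncomputable section

/-- Formulas of the epistemic language `L_D` with distributed knowledge `D_B`
for nonempty groups `B` of agents. -/
inductive Form (A AP : Type) : Type
  | atom : AP → Form A AP
  | neg  : Form A AP → Form A AP
  | and  : Form A AP → Form A AP → Form A AP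
  | dk   : (B : Finset A) → B.Nonempty → Form A AP → Form A AP

namespace Form

variable {A AP : Type}

/-- Disjunction, `φ ∨ ψ := ¬(¬φ ∧ ¬ψ)`. -/
def or (φ ψ : Form A AP) : Form A AP := neg ((neg φ).and (neg ψ))

/-- Implication, `φ ⇒ ψ := ¬φ ∨ ψ`. -/
def imp (φ ψ : Form A AP) : Form A AP := (neg φ).or ψ

/-- `⊤ := p ∨ ¬p`. -/
def verum [Nonempty AP] : Form A AP :=
  (atom (Classical.arbitrary AP)).or (neg (atom (Classical.arbitrary AP)))

/-- `⊥ := ¬⊤`. -/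
def falsum [Nonempty AP] : Form A AP := neg verum

/-- Individual knowledge `K_a φ := D_{{a}} φ`. -/
def K (a : A) (φ : Form A AP) : Form A AP := dk {a} (Finset.singleton_nonempty a) φ

/-- `dead_a := K_a ⊥`. -/
def deadAgent [Nonempty AP] (a : A) : Form A AP := K a falsum

/-- `alive_a := ¬dead_a`. -/
def aliveAgent [Nonempty AP] (a : A) : Form A AP := (deadAgent a).neg

/-- `alive_B := ¬ D_B ⊥`. -/
def aliveGrp [Nonempty AP] (B : Finset A) (hB : B.Nonempty) : Form A AP := (dk B hB falsum).neg

/-- Finite conjunction. -/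
def bigAnd [Nonempty AP] : List (Form A AP) → Form A AP
  | [] => verum
  | φ :: t => φ.and (bigAnd t)

/-- Finite disjunction. -/
def bigOr [Nonempty AP] : List (Form A AP) → Form A AP
  | [] => falsum
  | φ :: t => φ.or (bigOr t)

/-- `dead_C := ⋀_{a ∈ C} dead_a`. -/
def deadGrp [Nonempty AP] (C : Finset A) : Form A AP := bigAnd (C.toList.map deadAgent)

end Form

/-- A propositional tautology: true under every assignment that interprets `¬` and `∧`
classically (atoms and `D_B`-formulas are treated as opaque). -/
def IsTaut {A AP : Type} (φ : Form A AP) : Prop :=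
  ∀ v : Form A AP → Prop,
    (∀ ψ : Form A AP, v ψ.neg ↔ ¬ v ψ) →
    (∀ ψ χ : Form A AP, v (ψ.and χ) ↔ (v ψ ∧ v χ)) →
    v φ

theorem unionNE {α : Type} [DecidableEq α] {s t : Finset α} (h : s.Nonempty) :
    (s ∪ t).Nonempty :=
  ⟨h.choose, Finset.mem_union_left _ h.choose_spec⟩

section ProofSystem

variable {A AP : Type} [Fintype A] [Nonempty AP]

/-- The proof system `SC` (axioms `K`, `B`, `4`, `Mono`, `Union`, `NE`, `P`, all
propositional tautologies, modus ponens and necessitation), extended by an arbitrary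
additional set `Ax` of axioms. -/
inductive Prf (Ax : Form A AP → Prop) : Form A AP → Prop
  | taut {φ : Form A AP} : IsTaut φ → Prf Ax φ
  | mp {φ ψ : Form A AP} : Prf Ax (φ.imp ψ) → Prf Ax φ → Prf Ax ψ
  | nec {φ : Form A AP} (B : Finset A) (hB : B.Nonempty) :
      Prf Ax φ → Prf Ax (Form.dk B hB φ)
  | axK {φ ψ : Form A AP} (B : Finset A) (hB : B.Nonempty) :
      Prf Ax ((Form.dk B hB (φ.imp ψ)).imp ((Form.dk B hB φ).imp (Form.dk B hB ψ)))
  | axB {φ : Form A AP} (B : Finset A) (hB : B.Nonempty) :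
      Prf Ax (φ.imp (Form.dk B hB (Form.neg (Form.dk B hB φ.neg))))
  | ax4 {φ : Form A AP} (B : Finset A) (hB : B.Nonempty) :
      Prf Ax ((Form.dk B hB φ).imp (Form.dk B hB (Form.dk B hB φ)))
  | axMono {φ : Form A AP} (B B' : Finset A) (hB : B.Nonempty) (hB' : B'.Nonempty)
      (hsub : B ⊆ B') : Prf Ax ((Form.dk B hB φ).imp (Form.dk B' hB' φ))
  | axUnion (B B' : Finset A) (hB : B.Nonempty) (hB' : B'.Nonempty) :
      Prf Ax (((Form.aliveGrp B hB).and (Form.aliveGrp B' hB')).imp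
        (Form.aliveGrp (B ∪ B') (unionNE hB)))
  | axNE : Prf Ax (Form.bigOr ((Finset.univ : Finset A).toList.map Form.aliveAgent))
  | axP {φ : Form A AP} (B : Finset A) (hB : B.Nonempty) :
      Prf Ax ((((Form.aliveGrp B hB).and (Form.deadGrp Bᶜ)).and φ).imp
        (Form.dk B hB ((Form.deadGrp Bᶜ).imp φ)))
  | extra {φ : Form A AP} : Ax φ → Prf Ax φ

/-- Provability in `SC` itself (no extra axioms). -/
def SC : Form A AP → Prop := Prf (fun _ => False)

/-- Instances of Axiom `Min : alive_B ∧ dead_{A∖B} ⇒ D_B dead_{A∖B}` for `B ⊊ A`. -/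
def MinAx : Form A AP → Prop := fun φ =>
  ∃ (B : Finset A) (hB : B.Nonempty), B ≠ Finset.univ ∧
    φ = ((Form.aliveGrp B hB).and (Form.deadGrp Bᶜ)).imp (Form.dk B hB (Form.deadGrp Bᶜ))

/-- Instances of Axiom `Max : alive_B ⇒ ¬ D_B ¬ dead_{A∖B}` for `B ⊊ A`. -/
def MaxAx : Form A AP → Prop := fun φ =>
  ∃ (B : Finset A) (hB : B.Nonempty), B ≠ Finset.univ ∧
    φ = (Form.aliveGrp B hB).imp (Form.neg (Form.dk B hB (Form.neg (Form.deadGrp Bᶜ))))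

/-- Provability in `SCmin = SC + Min`. -/
def SCmin : Form A AP → Prop := Prf MinAx

/-- Provability in `SCmax = SC + Max`. -/
def SCmax : Form A AP → Prop := Prf MaxAx

/-- `Γ ⊢_P φ` : some finite conjunction of members of `Γ` provably implies `φ`. -/
def ProvesFrom (P : Form A AP → Prop) (Γ : Set (Form A AP)) (φ : Form A AP) : Prop :=
  ∃ L : List (Form A AP), (∀ γ ∈ L, γ ∈ Γ) ∧ P ((Form.bigAnd L).imp φ)

/-- Consistency of a set of formulas with respect to a provability predicate `P`. -/
def ConsistentSet (P : Form A AP → Prop) (Γ : Set (Form A AP)) : Prop :=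
  ¬ ProvesFrom P Γ Form.falsum

/-- Maximal consistent sets of formulas. -/
def MaxConsistent (P : Form A AP → Prop) (Γ : Set (Form A AP)) : Prop :=
  ConsistentSet P Γ ∧ ∀ φ ∉ Γ, ¬ ConsistentSet P (insert φ Γ)

end ProofSystem

/-! ### Simplicial models -/

/-- The data of a (generalized) simplicial model: a set `S` of simplexes over the vertex
type `V`, a colouring `chi`, a set of worlds `Wld` and a labelling of worlds. -/
structure SimpData (A AP V : Type) where
  S : Set (Finset V)
  chi : V → A
  Wld : Set (Finset V)
  label : Finset V → Set AP

namespace SimpData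

variable {A AP V : Type}

/-- A facet: a simplex maximal under inclusion. -/
def IsFacet (C : SimpData A AP V) (X : Finset V) : Prop :=
  X ∈ C.S ∧ ∀ Y ∈ C.S, X ⊆ Y → X = Y

/-- `⟨V,S,chi⟩` is a chromatic simplicial complex: simplexes are nonempty, every
singleton is a simplex, `S` is downward closed, and every simplex has pairwise
distinct colours. -/
def IsComplex (C : SimpData A AP V) : Prop :=
  (∀ X ∈ C.S, X.Nonempty) ∧
  (∀ v : V, ({v} : Finset V) ∈ C.S) ∧
  (∀ X ∈ C.S, ∀ Y : Finset V, Y ⊆ X → Y.Nonempty → Y ∈ C.S) ∧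
  (∀ X ∈ C.S, ∀ v ∈ X, ∀ w ∈ X, C.chi v = C.chi w → v = w)

/-- `C` is a generalized simplicial model: a chromatic simplicial complex together
with a set of worlds `Wld` with `Facets(C) ⊆ Wld ⊆ S`. -/
def IsModel (C : SimpData A AP V) : Prop :=
  C.IsComplex ∧ (∀ X, C.IsFacet X → X ∈ C.Wld) ∧ C.Wld ⊆ C.S

/-- The model is minimal: the worlds are exactly the facets. -/
def Minimal (C : SimpData A AP V) : Prop := ∀ X, X ∈ C.Wld ↔ C.IsFacet X

/-- The model is maximal: every simplex is a world. -/
def Maximal (C : SimpData A AP V) : Prop := C.Wld = C.S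

end SimpData

/-- Satisfaction on simplicial models: `C,w ⊨ D_B φ` iff `φ` holds at every world `w'`
with `B ⊆ chi(w ∩ w')`. -/
def SimpData.sat {A AP V : Type} (C : SimpData A AP V) : Finset V → Form A AP → Prop
  | w, .atom p => p ∈ C.label w
  | w, .neg φ => ¬ C.sat w φ
  | w, .and φ ψ => C.sat w φ ∧ C.sat w ψ
  | w, .dk B _ φ => ∀ w' ∈ C.Wld, (↑B : Set A) ⊆ C.chi '' ((↑w : Set V) ∩ ↑w') → C.sat w' φ

/-! ### Partial epistemic models -/

/-- The data of a partial epistemic model: an accessibility relation for each agent and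
a labelling of worlds. -/
structure PEData (A AP W : Type) where
  rel : A → W → W → Prop
  label : W → Set AP

namespace PEData

variable {A AP W : Type}

/-- Each relation is a partial equivalence relation (symmetric and transitive). -/
def IsPE (M : PEData A AP W) : Prop := ∀ a : A, Symmetric (M.rel a) ∧ Transitive (M.rel a)

/-- The set of agents alive in a world. -/
def live (M : PEData A AP W) (w : W) : Set A := {a | M.rel a w w}

/-- Every world has at least one alive agent. -/
def NoEmptyWorld (M : PEData A AP W) : Prop := ∀ w : W, (M.live w).Nonempty

/-- Distinct worlds with the same alive agents are distinguished by some alive agent. -/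
def Proper (M : PEData A AP W) : Prop :=
  ∀ w w' : W, w ≠ w' → M.live w = M.live w' → ∃ a ∈ M.live w, ¬ M.rel a w w'

/-- The model has no sub-world. -/
def Minimal (M : PEData A AP W) : Prop :=
  ∀ w w' : W, M.live w ⊂ M.live w' → ∃ a ∈ M.live w, ¬ M.rel a w w'

/-- The model has all sub-worlds. -/
def Maximal (M : PEData A AP W) : Prop :=
  ∀ w' : W, ∀ B : Set A, B.Nonempty → B ⊂ M.live w' →
    ∃ w : W, M.live w = B ∧ ∀ a ∈ B, M.rel a w w'

end PEData

/-- Satisfaction on partial epistemic models: `M,w ⊨ D_B φ` iff `φ` holds at every `w'`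
with `w ∼_a w'` for all `a ∈ B`. -/
def PEData.sat {A AP W : Type} (M : PEData A AP W) : W → Form A AP → Prop
  | w, .atom p => p ∈ M.label w
  | w, .neg φ => ¬ M.sat w φ
  | w, .and φ ψ => M.sat w φ ∧ M.sat w ψ
  | w, .dk B _ φ => ∀ w' : W, (∀ a ∈ B, M.rel a w w') → M.sat w' φ

/-- The partial epistemic model `κ(C)` associated with a simplicial model `C`:
same worlds, `w ∼_a w'` iff `a ∈ chi(w ∩ w')`, same labelling. -/
def kappa {A AP V : Type} (C : SimpData A AP V) : PEData A AP {w : Finset V // w ∈ C.Wld} where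
  rel := fun a w w' => a ∈ C.chi '' ((↑w.1 : Set V) ∩ ↑w'.1)
  label := fun w => C.label w.1

/-- Vertices of `σ(M)`: pairs `v^w_a = (a, [w]_a)` with `a` alive in `w`. -/
def sigmaVert {A AP W : Type} (M : PEData A AP W) : Type :=
  {v : A × Set W // ∃ w : W, M.rel v.1 w w ∧ v.2 = {w' | M.rel v.1 w w'}}

/-- The world `X_w = { v^w_a | a ∈ live(w) }` of `σ(M)`. -/
def sigmaWorld {A AP W : Type} [Fintype A] (M : PEData A AP W) (w : W) :
    Finset (sigmaVert M) :=
  ((Finset.univ : Finset A).filter (fun a => M.rel a w w)).attach.image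
    (fun a => ⟨(a.1, {w' | M.rel a.1 w w'}),
      ⟨w, by exact (Finset.mem_filter.mp a.2).2, rfl⟩⟩)

/-- The simplicial model `σ(M)` associated with a partial epistemic model `M`:
simplexes are the nonempty subsets of the sets `X_w`, worlds are the `X_w`,
colouring is the first projection, and `ℓ(X_w) = L(w)`. -/
def sigmaModel {A AP W : Type} [Fintype A] (M : PEData A AP W) :
    SimpData A AP (sigmaVert M) where
  S := {X | X.Nonempty ∧ ∃ w : W, X ⊆ sigmaWorld M w}
  chi := fun v => v.1.1
  Wld := {X | ∃ w : W, X = sigmaWorld M w}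
  label := fun X => {p | ∃ w : W, X = sigmaWorld M w ∧ p ∈ M.label w}

/-! ### Pseudo-models, the canonical model and unravelling -/

/-- The data of a pseudo-model: a relation `∼_B` for every group `B ⊆ A`. -/
structure PseudoData (A AP W : Type) where
  rel : Finset A → W → W → Prop
  label : W → Set AP

/-- `M` is a pseudo-model: each `∼_B` is symmetric and transitive, the relations are
antitone (`∼_{B'} ⊆ ∼_B` for `B ⊆ B'`), and `w ∼_B w` together with `w ∼_{B'} w`
implies `w ∼_{B ∪ B'} w`. -/
def PseudoData.IsPseudo {A AP W : Type} [DecidableEq A] (M : PseudoData A AP W) : Prop :=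
  (∀ B : Finset A, Symmetric (M.rel B)) ∧
  (∀ B : Finset A, Transitive (M.rel B)) ∧
  (∀ B B' : Finset A, B ⊆ B' → ∀ w w' : W, M.rel B' w w' → M.rel B w w') ∧
  (∀ (w : W) (B B' : Finset A), M.rel B w w → M.rel B' w w → M.rel (B ∪ B') w w)

/-- Satisfaction on pseudo-models: `D_B φ` quantifies over `∼_B`-successors. -/
def PseudoData.sat {A AP W : Type} (M : PseudoData A AP W) : W → Form A AP → Prop
  | w, .atom p => p ∈ M.label w
  | w, .neg φ => ¬ M.sat w φ
  | w, .and φ ψ => M.sat w φ ∧ M.sat w ψ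
  | w, .dk B _ φ => ∀ w' : W, M.rel B w w' → M.sat w' φ

/-- The canonical pseudo-model of a proof system `P`: worlds are the maximal
`P`-consistent sets, `Γ ∼_B Δ` iff every `φ` with `D_B φ ∈ Γ` satisfies `φ ∈ Δ`,
and `L(Γ) = Γ ∩ AP`. -/
def canonicalPsm (A AP : Type) [Fintype A] [Nonempty AP] (P : Form A AP → Prop) :
    PseudoData A AP {Γ : Set (Form A AP) // MaxConsistent P Γ} where
  rel := fun B Γ Δ => ∀ (hB : B.Nonempty) (φ : Form A AP), Form.dk B hB φ ∈ Γ.1 → φ ∈ Δ.1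
  label := fun Γ => {p | Form.atom p ∈ Γ.1}

/-- `IsHist M w l` : the sequence starting at `w` with steps `l` is a history of `M`. -/
def IsHist {A AP W : Type} (M : PseudoData A AP W) : W → List (Finset A × W) → Prop
  | _, [] => True
  | w, (B, w') :: t => M.rel B w w' ∧ IsHist M w' t

/-- A history `(w₀, B₁, w₁, …, B_k, w_k)` of a pseudo-model `M`. -/
structure Hist {A AP W : Type} (M : PseudoData A AP W) where
  first : W
  steps : List (Finset A × W)
  valid : IsHist M first steps

/-- The last world of a history. -/
def Hist.last {A AP W : Type} {M : PseudoData A AP W} (h : Hist M) : W :=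
  (h.steps.map Prod.snd).getLastD h.first

/-- `h →_a h'` : `h'` extends `h` by one step `(B, w)` with `a ∈ B`. -/
def histStep {A AP W : Type} (M : PseudoData A AP W) (a : A) (h h' : Hist M) : Prop :=
  ∃ (B : Finset A) (w : W), a ∈ B ∧ h'.first = h.first ∧ h'.steps = h.steps ++ [(B, w)]

/-- `∼^U_a` : the symmetric-transitive closure of `→_a`. -/
def histRel {A AP W : Type} (M : PseudoData A AP W) (a : A) : Hist M → Hist M → Prop :=
  Relation.TransGen (fun h h' => histStep M a h h' ∨ histStep M a h' h)

/-- The unravelling `U(M)` of a pseudo-model `M`: worlds are histories, relations are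
the `∼^U_a`, and `L^U(h) = L(last h)`. -/
def unravel {A AP W : Type} (M : PseudoData A AP W) : PEData A AP (Hist M) where
  rel := histRel M
  label := fun h => M.label h.last

/-- World-equivalence `w ≡ w'` : same alive agents and related by every alive agent. -/
def pequiv {A AP W : Type} (M : PEData A AP W) (w w' : W) : Prop :=
  M.live w = M.live w' ∧ ∀ a ∈ M.live w, M.rel a w w'

/-- The quotient of a partial epistemic model by world-equivalence. -/
def properify {A AP W : Type} (M : PEData A AP W) : PEData A AP (Quot (pequiv M)) where
  rel := fun a x y => ∃ w w' : W, x = Quot.mk _ w ∧ y = Quot.mk _ w' ∧ M.rel a w w'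
  label := fun x => {p | ∃ w : W, x = Quot.mk _ w ∧ p ∈ M.label w}

/-! ### Local simplicial models, morphisms and the guarded positive fragment -/

/-- The data of a local simplicial model: atomic propositions label the vertices. -/
structure LocalSimpData (A AP V : Type) where
  S : Set (Finset V)
  chi : V → A
  Wld : Set (Finset V)
  vlabel : V → Set AP

namespace LocalSimpData

variable {A AP V : Type}

/-- A facet: a simplex maximal under inclusion. -/
def IsFacet (C : LocalSimpData A AP V) (X : Finset V) : Prop :=
  X ∈ C.S ∧ ∀ Y ∈ C.S, X ⊆ Y → X = Y

/-- `C` is a local simplicial model with respect to the ownership map `owner : AP → A`: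
a chromatic simplicial complex with `Facets ⊆ Wld ⊆ S`, where each vertex is labelled
with atomic propositions belonging to its colour. -/
def IsModel (C : LocalSimpData A AP V) (owner : AP → A) : Prop :=
  (∀ X ∈ C.S, X.Nonempty) ∧
  (∀ v : V, ({v} : Finset V) ∈ C.S) ∧
  (∀ X ∈ C.S, ∀ Y : Finset V, Y ⊆ X → Y.Nonempty → Y ∈ C.S) ∧
  (∀ X ∈ C.S, ∀ v ∈ X, ∀ w ∈ X, C.chi v = C.chi w → v = w) ∧
  (∀ X, C.IsFacet X → X ∈ C.Wld) ∧ C.Wld ⊆ C.S ∧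
  (∀ v : V, ∀ p ∈ C.vlabel v, owner p = C.chi v)

/-- The labelling of a world: the union of the labellings of its vertices. -/
def wlabel (C : LocalSimpData A AP V) (X : Finset V) : Set AP :=
  ⋃ v ∈ X, C.vlabel v

end LocalSimpData

/-- Purely propositional formulas. -/
inductive PForm (AP : Type) : Type
  | atom : AP → PForm AP
  | neg : PForm AP → PForm AP
  | and : PForm AP → PForm AP → PForm AP

/-- The atomic propositions occurring in a propositional formula. -/
def PForm.atoms {AP : Type} : PForm AP → Set AP
  | .atom p => {p}
  | .neg ψ => ψ.atoms
  | .and ψ χ => ψ.atoms ∪ χ.atoms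

/-- Satisfaction of propositional formulas at a world of a local simplicial model. -/
def PForm.psat {A AP V : Type} (C : LocalSimpData A AP V) (w : Finset V) : PForm AP → Prop
  | .atom p => p ∈ C.wlabel w
  | .neg ψ => ¬ PForm.psat C w ψ
  | .and ψ χ => PForm.psat C w ψ ∧ PForm.psat C w χ

/-- The guarded positive epistemic fragment:
`φ ::= (alive_B ⇒ ψ_B) | φ∧φ | φ∨φ | D_U φ | C_U φ`. -/
inductive GForm (A AP : Type) : Type
  | guard : Finset A → PForm AP → GForm A AP
  | and : GForm A AP → GForm A AP → GForm A AP
  | or : GForm A AP → GForm A AP → GForm A AP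
  | dk : Finset A → GForm A AP → GForm A AP
  | ck : Finset A → GForm A AP → GForm A AP

/-- Well-formedness of guarded formulas: in a guard `alive_B ⇒ ψ_B`, all atomic
propositions of `ψ_B` belong to agents of `B`. -/
def GForm.WF {A AP : Type} (owner : AP → A) : GForm A AP → Prop
  | .guard B ψ => ∀ p ∈ ψ.atoms, owner p ∈ B
  | .and φ₁ φ₂ => φ₁.WF owner ∧ φ₂.WF owner
  | .or φ₁ φ₂ => φ₁.WF owner ∧ φ₂.WF owner
  | .dk _ φ => φ.WF owner
  | .ck _ φ => φ.WF owner

/-- Reachability through a sequence of worlds, consecutive ones sharing a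
`U`-coloured simplex. -/
def creach {A AP V : Type} (C : LocalSimpData A AP V) (U : Finset A) :
    Finset V → Finset V → Prop :=
  Relation.ReflTransGen
    (fun X Y => Y ∈ C.Wld ∧ (↑U : Set A) ⊆ C.chi '' ((↑X : Set V) ∩ ↑Y))

/-- Satisfaction of guarded positive formulas on local simplicial models. -/
def GForm.gsat {A AP V : Type} (C : LocalSimpData A AP V) :
    Finset V → GForm A AP → Prop
  | w, .guard B ψ => ((↑B : Set A) ⊆ C.chi '' (↑w : Set V)) → ψ.psat C w
  | w, .and φ₁ φ₂ => φ₁.gsat C w ∧ φ₂.gsat C w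
  | w, .or φ₁ φ₂ => φ₁.gsat C w ∨ φ₂.gsat C w
  | w, .dk U φ => ∀ w' ∈ C.Wld, (↑U : Set A) ⊆ C.chi '' ((↑w : Set V) ∩ ↑w') → φ.gsat C w'
  | w, .ck U φ => ∀ w' ∈ C.Wld, creach C U w w' → φ.gsat C w'

/-- Image of a simplex under a vertex map. -/
def fimage {V V' : Type} (f : V → V') (X : Finset V) : Finset V' :=
  X.image f

/-- Morphisms of local simplicial models: map simplexes to simplexes and worlds to
worlds, preserving colours and vertex labellings. -/
def IsMorphism {A AP V V' : Type} (C : LocalSimpData A AP V) (D : LocalSimpData A AP V')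
    (f : V → V') : Prop :=
  (∀ X ∈ C.S, fimage f X ∈ D.S) ∧
  (∀ X ∈ C.Wld, fimage f X ∈ D.Wld) ∧
  (∀ v : V, D.chi (f v) = C.chi v) ∧
  (∀ v : V, D.vlabel (f v) = C.vlabel v)

end

/-!
In the canonical model, `Γ ∼_B Δ` with `a ∈ B` forces `alive_a ∈ Γ`: otherwise Mono turns
`K_a ⊥ ∈ Γ` into `D_B ⊥ ∈ Γ`, putting `⊥` into `Δ`. Axiom B makes `∼_B` symmetric, so the same
holds for `Δ`. Conversely, if `alive_a ∈ Γ` then `Γ ∼_{a} Γ`: were `D_a φ ∈ Γ` but `¬φ ∈ Γ`,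
Axioms 4 and B would give both `D_a D_a φ` and `D_a ¬ D_a φ`, hence `K_a ⊥ ∈ Γ`.

In the unravelling, `h ∼^U_a h` holds iff `h` has a neighbour along some `→_a`-step, i.e. iff
`last h` is `∼_B`-related (in one direction or the other) to some world for some `B ∋ a`;
the loop `h →_a (h, {a}, last h)` realises this when `last h ∼_{a} last h`.
-/

section Valuation

variable {A AP : Type}

def IsValuation (v : Form A AP → Prop) : Prop :=
  (∀ ψ, v ψ.neg ↔ ¬ v ψ) ∧ ∀ ψ χ, v (ψ.and χ) ↔ v ψ ∧ v χ

namespace IsValuation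

variable {v : Form A AP → Prop}

theorem neg_iff (hv : IsValuation v) (ψ : Form A AP) : v ψ.neg ↔ ¬ v ψ := hv.1 ψ

theorem and_iff (hv : IsValuation v) (ψ χ : Form A AP) : v (ψ.and χ) ↔ v ψ ∧ v χ := hv.2 ψ χ

theorem or_iff (hv : IsValuation v) (ψ χ : Form A AP) : v (ψ.or χ) ↔ v ψ ∨ v χ := by
  simp only [Form.or, hv.neg_iff, hv.and_iff]
  tauto

theorem imp_iff (hv : IsValuation v) (ψ χ : Form A AP) : v (ψ.imp χ) ↔ (v ψ → v χ) := by
  simp only [Form.imp, hv.or_iff, hv.neg_iff]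
  tauto

theorem not_falsum [Nonempty AP] (hv : IsValuation v) : ¬ v (Form.falsum : Form A AP) := by
  simp only [Form.falsum, Form.verum, hv.neg_iff, hv.or_iff]
  tauto

theorem bigAnd_iff [Nonempty AP] (hv : IsValuation v) (L : List (Form A AP)) :
    v (Form.bigAnd L) ↔ ∀ γ ∈ L, v γ := by
  induction L with
  | nil => simp only [Form.bigAnd, Form.verum, hv.or_iff, hv.neg_iff]; simp; tauto
  | cons φ t ih => simp [Form.bigAnd, hv.and_iff, ih]

end IsValuation

end Valuation

section MaxConsistent

variable {A AP : Type} [Fintype A] [Nonempty AP] {Ax : Form A AP → Prop}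

theorem Prf.of_valid {φ : Form A AP} (h : ∀ v, IsValuation v → v φ) : Prf Ax φ :=
  Prf.taut fun v hneg hand => h v ⟨hneg, hand⟩

namespace ProvesFrom

variable {Γ : Set (Form A AP)} {φ ψ χ : Form A AP}

theorem of_prf (h : Prf Ax φ) : ProvesFrom (Prf Ax) Γ φ :=
  ⟨[], by simp, Prf.mp (Prf.of_valid fun v hv => by simp only [hv.imp_iff]; tauto) h⟩

theorem of_mem (h : φ ∈ Γ) : ProvesFrom (Prf Ax) Γ φ :=
  ⟨[φ], by simpa using h, Prf.of_valid fun v hv => by simp [hv.imp_iff, hv.bigAnd_iff]⟩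

theorem mp₂ (hφ : ProvesFrom (Prf Ax) Γ φ) (hψ : ProvesFrom (Prf Ax) Γ ψ)
    (h : Prf Ax (φ.imp (ψ.imp χ))) : ProvesFrom (Prf Ax) Γ χ := by
  obtain ⟨L, hLΓ, hL⟩ := hφ
  obtain ⟨M, hMΓ, hM⟩ := hψ
  refine ⟨L ++ M, fun γ hγ => (List.mem_append.1 hγ).elim (hLΓ γ) (hMΓ γ), ?_⟩
  refine Prf.mp (Prf.mp (Prf.mp (Prf.of_valid fun v hv => ?_) hL) hM) h
  simp only [hv.imp_iff, hv.bigAnd_iff, List.mem_append]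
  grind

end ProvesFrom

namespace MaxConsistent

variable {Γ : Set (Form A AP)} {φ ψ : Form A AP}

/-- The members of an inconsistent `insert φ Γ` other than `φ` refute `φ`. -/
theorem provesFrom_neg_of_not_mem (hΓ : MaxConsistent (Prf Ax) Γ) (hφ : φ ∉ Γ) :
    ProvesFrom (Prf Ax) Γ φ.neg := by
  obtain ⟨L, hLΓ, hL⟩ := not_not.1 (hΓ.2 φ hφ)
  refine ⟨L.filter (· ≠ φ), fun γ hγ => ?_, Prf.mp (Prf.of_valid fun v hv => ?_) hL⟩
  · simp only [List.mem_filter, decide_eq_true_eq] at hγ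
    exact (Set.mem_insert_iff.1 (hLΓ γ hγ.1)).resolve_left hγ.2
  · simp only [hv.imp_iff, hv.bigAnd_iff, hv.neg_iff, List.mem_filter, decide_eq_true_eq]
    have := hv.not_falsum
    grind

theorem mem_of_provesFrom (hΓ : MaxConsistent (Prf Ax) Γ) (h : ProvesFrom (Prf Ax) Γ φ) :
    φ ∈ Γ := by
  by_contra hφ
  refine hΓ.1 (h.mp₂ (hΓ.provesFrom_neg_of_not_mem hφ) (Prf.of_valid fun v hv => ?_))
  simp only [hv.imp_iff, hv.neg_iff]
  tauto

theorem mem_of_prf (hΓ : MaxConsistent (Prf Ax) Γ) (h : Prf Ax φ) : φ ∈ Γ :=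
  hΓ.mem_of_provesFrom (.of_prf h)

theorem mem_of_imp_mem (hΓ : MaxConsistent (Prf Ax) Γ) (himp : φ.imp ψ ∈ Γ) (hφ : φ ∈ Γ) :
    ψ ∈ Γ :=
  hΓ.mem_of_provesFrom <| (ProvesFrom.of_mem himp).mp₂ (.of_mem hφ) <|
    Prf.of_valid fun v hv => by simp only [hv.imp_iff]; tauto

theorem mem_of_prf_imp (hΓ : MaxConsistent (Prf Ax) Γ) (h : Prf Ax (φ.imp ψ)) (hφ : φ ∈ Γ) :
    ψ ∈ Γ :=
  hΓ.mem_of_imp_mem (hΓ.mem_of_prf h) hφ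

theorem falsum_not_mem (hΓ : MaxConsistent (Prf Ax) Γ) : Form.falsum ∉ Γ :=
  fun h => hΓ.1 (.of_mem h)

theorem neg_mem_iff (hΓ : MaxConsistent (Prf Ax) Γ) : φ.neg ∈ Γ ↔ φ ∉ Γ := by
  refine ⟨fun hneg hφ => hΓ.1 ?_, fun hφ => hΓ.mem_of_provesFrom (hΓ.provesFrom_neg_of_not_mem hφ)⟩
  refine (ProvesFrom.of_mem hφ).mp₂ (.of_mem hneg) (Prf.of_valid fun v hv => ?_)
  simp only [hv.imp_iff, hv.neg_iff]
  tauto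

end MaxConsistent

end MaxConsistent

section Canonical

variable {A AP : Type} [Fintype A] [Nonempty AP] {Ax : Form A AP → Prop}

theorem MaxConsistent.dk_mem_of_prf_imp {Γ : Set (Form A AP)} (hΓ : MaxConsistent (Prf Ax) Γ)
    {B : Finset A} {hB : B.Nonempty} {φ ψ : Form A AP} (h : Prf Ax (φ.imp ψ))
    (hφ : Form.dk B hB φ ∈ Γ) : Form.dk B hB ψ ∈ Γ :=
  hΓ.mem_of_prf_imp (Prf.mp (Prf.axK B hB) (Prf.nec B hB h)) hφ

variable {Γ Δ : {Γ : Set (Form A AP) // MaxConsistent (Prf Ax) Γ}} {B : Finset A}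

theorem canonicalPsm_rel_symm (hΓΔ : (canonicalPsm A AP (Prf Ax)).rel B Γ Δ) :
    (canonicalPsm A AP (Prf Ax)).rel B Δ Γ := by
  intro hB ψ hψ
  by_contra hψΓ
  have hBaxiom : Form.dk B hB (Form.neg (Form.dk B hB ψ.neg.neg)) ∈ Γ.1 :=
    Γ.2.mem_of_prf_imp (Prf.axB B hB) (Γ.2.neg_mem_iff.2 hψΓ)
  have hψnn : Form.dk B hB ψ.neg.neg ∈ Δ.1 :=
    Δ.2.dk_mem_of_prf_imp (Prf.of_valid fun v hv => by simp only [hv.imp_iff, hv.neg_iff]; tauto) hψ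
  exact Δ.2.neg_mem_iff.1 (hΓΔ hB _ hBaxiom) hψnn

theorem aliveAgent_mem_of_canonicalPsm_rel {a : A} (ha : a ∈ B)
    (hΓΔ : (canonicalPsm A AP (Prf Ax)).rel B Γ Δ) : Form.aliveAgent a ∈ Γ.1 := by
  refine Γ.2.neg_mem_iff.2 fun hdead => Δ.2.falsum_not_mem (hΓΔ ⟨a, ha⟩ _ ?_)
  exact Γ.2.mem_of_prf_imp
    (Prf.axMono {a} B (Finset.singleton_nonempty a) ⟨a, ha⟩ (Finset.singleton_subset_iff.2 ha))
    hdead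

theorem canonicalPsm_rel_self_of_aliveAgent_mem {a : A} (halive : Form.aliveAgent a ∈ Γ.1) :
    (canonicalPsm A AP (Prf Ax)).rel {a} Γ Γ := by
  intro ha φ hφ
  by_contra hφΓ
  let χ : Form A AP := Form.dk {a} ha φ.neg.neg
  have hχ : Form.dk {a} ha χ ∈ Γ.1 :=
    Γ.2.mem_of_prf_imp (Prf.ax4 {a} ha) <| Γ.2.dk_mem_of_prf_imp
      (Prf.of_valid fun v hv => by simp only [hv.imp_iff, hv.neg_iff]; tauto) hφ
  have hnegχ : Form.dk {a} ha χ.neg ∈ Γ.1 :=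
    Γ.2.mem_of_prf_imp (Prf.axB {a} ha) (Γ.2.neg_mem_iff.2 hφΓ)
  have hdead : Form.dk {a} ha Form.falsum ∈ Γ.1 := by
    refine Γ.2.mem_of_imp_mem (Γ.2.mem_of_prf_imp (Prf.axK {a} ha) ?_) hχ
    exact Γ.2.dk_mem_of_prf_imp (Prf.of_valid fun v hv => by
      simp only [hv.imp_iff, hv.neg_iff]; have := hv.not_falsum; tauto) hnegχ
  exact Γ.2.neg_mem_iff.1 halive hdead

end Canonical

section Histories

variable {A AP W : Type} {M : PseudoData A AP W}

theorem IsHist.append {w : W} {l : List (Finset A × W)} (hl : IsHist M w l) {B : Finset A}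
    {w' : W} (hrel : M.rel B ((l.map Prod.snd).getLastD w) w') :
    IsHist M w (l ++ [(B, w')]) := by
  induction l generalizing w with
  | nil => exact ⟨hrel, trivial⟩
  | cons p t ih =>
    rw [List.map_cons, List.getLastD_cons] at hrel
    exact ⟨hl.1, ih hl.2 hrel⟩

theorem IsHist.rel_getLastD_of_append {w : W} {l : List (Finset A × W)} {B : Finset A} {w' : W}
    (hl : IsHist M w (l ++ [(B, w')])) : M.rel B ((l.map Prod.snd).getLastD w) w' := by
  induction l generalizing w with
  | nil => exact hl.1
  | cons p t ih =>
    rw [List.map_cons, List.getLastD_cons]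
    exact ih hl.2

def Hist.extend (h : Hist M) (B : Finset A) (w : W) (hrel : M.rel B h.last w) : Hist M :=
  ⟨h.first, h.steps ++ [(B, w)], h.valid.append hrel⟩

theorem histStep_extend {h : Hist M} {a : A} {B : Finset A} (ha : a ∈ B) {w : W}
    (hrel : M.rel B h.last w) : histStep M a h (h.extend B w hrel) :=
  ⟨B, w, ha, rfl, rfl⟩

theorem histStep.rel_last {a : A} {h h' : Hist M} (hstep : histStep M a h h') :
    ∃ B, a ∈ B ∧ M.rel B h.last h'.last := by
  obtain ⟨B, w, ha, hfirst, hsteps⟩ := hstep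
  have hvalid := h'.valid
  rw [hsteps, hfirst] at hvalid
  have hlast : h'.last = w := by simp [Hist.last, hsteps]
  exact ⟨B, ha, hlast ▸ hvalid.rel_getLastD_of_append⟩

theorem exists_rel_last_of_histRel_self {a : A} {h : Hist M} (hh : histRel M a h h) :
    ∃ B, a ∈ B ∧ ∃ w, M.rel B h.last w ∨ M.rel B w h.last := by
  obtain ⟨h', hstep | hstep, -⟩ := Relation.TransGen.head'_iff.1 hh
  · obtain ⟨B, ha, hrel⟩ := hstep.rel_last
    exact ⟨B, ha, _, Or.inl hrel⟩
  · obtain ⟨B, ha, hrel⟩ := hstep.rel_last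
    exact ⟨B, ha, _, Or.inr hrel⟩

theorem histRel_self_of_rel_last {a : A} {h : Hist M} {B : Finset A} (ha : a ∈ B) {w : W}
    (hrel : M.rel B h.last w) : histRel M a h h :=
  .tail (.single (.inl (histStep_extend ha hrel))) (.inr (histStep_extend ha hrel))

end Histories

/-- Alive agents in histories of the canonical model: for a history `h`
of `Mc` with `Γ = last(h)`, agent `a` is alive in `h` in the unravelling `U(Mc)`
(i.e. `h ∼^U_a h`) iff `alive_a ∈ Γ`. -/
theorem alive_in_history (A AP : Type) [Fintype A] [Nonempty AP]
    (h : Hist (canonicalPsm A AP SC)) (a : A) :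
    histRel (canonicalPsm A AP SC) a h h ↔ Form.aliveAgent a ∈ h.last.1 := by
  constructor
  · intro hh
    obtain ⟨B, ha, Δ, hrel | hrel⟩ := exists_rel_last_of_histRel_self hh
    · exact aliveAgent_mem_of_canonicalPsm_rel ha hrel
    · exact aliveAgent_mem_of_canonicalPsm_rel ha (canonicalPsm_rel_symm hrel)
  · intro halive
    exact histRel_self_of_rel_last (Finset.mem_singleton_self a)
      (canonicalPsm_rel_self_of_aliveAgent_mem halive)
end

section
/- Equivalent histories of the unravelled canonical model have the same labelling: in the unravelling U(Mc) of the canonical pseudo-model of SC, if two histories h and h' satisfy h ≡ h' (i.e., they have the same set of alive agents and are ∼^U_a-related for every alive agent a), then L^U(h) = L^U(h'), i.e., last(h) and last(h') contain the same atomic propositions. -/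
attribute [local instance] Classical.propDecidable

/-! ### Auxiliary lemmas -/

section AuxProp
set_option linter.unusedSectionVars false

open Form

variable {A AP : Type} [Nonempty AP]

lemma v_imp {v : Form A AP → Prop} (hneg : ∀ ψ : Form A AP, v ψ.neg ↔ ¬ v ψ)
    (hand : ∀ ψ χ : Form A AP, v (ψ.and χ) ↔ (v ψ ∧ v χ)) (φ ψ : Form A AP) :
    v (φ.imp ψ) ↔ (v φ → v ψ) := by
  simp only [Form.imp, Form.or, hneg, hand]; tauto

lemma v_or {v : Form A AP → Prop} (hneg : ∀ ψ : Form A AP, v ψ.neg ↔ ¬ v ψ)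
    (hand : ∀ ψ χ : Form A AP, v (ψ.and χ) ↔ (v ψ ∧ v χ)) (φ ψ : Form A AP) :
    v (φ.or ψ) ↔ (v φ ∨ v ψ) := by
  simp only [Form.or, hneg, hand]; tauto

lemma v_verum {v : Form A AP → Prop} (hneg : ∀ ψ : Form A AP, v ψ.neg ↔ ¬ v ψ)
    (hand : ∀ ψ χ : Form A AP, v (ψ.and χ) ↔ (v ψ ∧ v χ)) :
    v (verum : Form A AP) ↔ True := by
  simp only [Form.verum, Form.or, hneg, hand]; tauto

lemma v_falsum {v : Form A AP → Prop} (hneg : ∀ ψ : Form A AP, v ψ.neg ↔ ¬ v ψ)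
    (hand : ∀ ψ χ : Form A AP, v (ψ.and χ) ↔ (v ψ ∧ v χ)) :
    v (falsum : Form A AP) ↔ False := by
  simp only [Form.falsum, hneg, v_verum hneg hand]; tauto

lemma v_bigAnd {v : Form A AP → Prop} (hneg : ∀ ψ : Form A AP, v ψ.neg ↔ ¬ v ψ)
    (hand : ∀ ψ χ : Form A AP, v (ψ.and χ) ↔ (v ψ ∧ v χ)) (L : List (Form A AP)) :
    v (bigAnd L) ↔ ∀ φ ∈ L, v φ := by
  induction L with
  | nil => simp [Form.bigAnd, v_verum hneg hand]
  | cons x t ih => simp [Form.bigAnd, hand, ih]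

lemma v_bigOr {v : Form A AP → Prop} (hneg : ∀ ψ : Form A AP, v ψ.neg ↔ ¬ v ψ)
    (hand : ∀ ψ χ : Form A AP, v (ψ.and χ) ↔ (v ψ ∧ v χ)) (L : List (Form A AP)) :
    v (bigOr L) ↔ ∃ φ ∈ L, v φ := by
  induction L with
  | nil => simp [Form.bigOr, v_falsum hneg hand]
  | cons x t ih => simp [Form.bigOr, v_or hneg hand, ih]

end AuxProp

section AuxMCS

open Form

variable {A AP : Type} [Fintype A] [Nonempty AP]

/-- Core lemma: maximal consistent sets contain everything they prove. -/
lemma mcs_proves {Γ : Set (Form A AP)} (hΓ : MaxConsistent SC Γ)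
    {L : List (Form A AP)} (hL : ∀ γ ∈ L, γ ∈ Γ) {φ : Form A AP}
    (hp : SC ((bigAnd L).imp φ)) : φ ∈ Γ := by
  by_contra hφ
  have hcons := hΓ.2 φ hφ
  rw [ConsistentSet, not_not] at hcons
  obtain ⟨L1, hL1, hp1⟩ := hcons
  set L' : List (Form A AP) := L ++ L1.filter (fun γ => γ ≠ φ) with hL'def
  have hL' : ∀ γ ∈ L', γ ∈ Γ := by
    intro γ hγ
    rcases List.mem_append.mp hγ with hg | hg
    · exact hL γ hg
    · have := List.mem_filter.mp hg
      rcases this.1, this.2 with ⟨h1, h2⟩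
      rcases hL1 γ h1 with h3 | h3
      · exact absurd h3 (by simpa using h2)
      · exact h3
  have htaut : IsTaut (((bigAnd L).imp φ).imp
      (((bigAnd L1).imp falsum).imp ((bigAnd L').imp falsum))) := by
    intro v hneg hand
    simp only [v_imp hneg hand, v_or hneg hand, v_verum hneg hand, v_falsum hneg hand, v_bigAnd hneg hand, hneg, hand]
    intro h1 h2 h3
    apply h2
    intro γ hγ
    by_cases hgφ : γ = φ
    · subst hgφ
      exact h1 (fun δ hδ => h3 δ (List.mem_append.mpr (Or.inl hδ)))
    · exact h3 γ (List.mem_append.mpr (Or.inr (List.mem_filter.mpr ⟨hγ, by simpa using hgφ⟩)))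
  have : SC ((bigAnd L').imp falsum) := Prf.mp (Prf.mp (Prf.taut htaut) hp) hp1
  exact hΓ.1 ⟨L', hL', this⟩

lemma mcs_closed {Γ : Set (Form A AP)} (hΓ : MaxConsistent SC Γ)
    {φ : Form A AP} (hp : SC φ) : φ ∈ Γ := by
  apply mcs_proves hΓ (L := []) (by simp)
  have htaut : IsTaut (φ.imp ((bigAnd ([] : List (Form A AP))).imp φ)) := by
    intro v hneg hand
    simp only [v_imp hneg hand, v_or hneg hand, v_verum hneg hand, v_falsum hneg hand, v_bigAnd hneg hand, hneg, hand]
    tauto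
  exact Prf.mp (Prf.taut htaut) hp

lemma mcs_falsum {Γ : Set (Form A AP)} (hΓ : MaxConsistent SC Γ) :
    (falsum : Form A AP) ∉ Γ := by
  intro hf
  apply hΓ.1
  refine ⟨[falsum], by simpa using hf, Prf.taut ?_⟩
  intro v hneg hand
  simp only [v_imp hneg hand, v_or hneg hand, v_verum hneg hand, v_falsum hneg hand, v_bigAnd hneg hand, hneg, hand]
  intro h1; exact (v_falsum hneg hand).mp (h1 falsum (by simp))

lemma mcs_em {Γ : Set (Form A AP)} (hΓ : MaxConsistent SC Γ) (φ : Form A AP) :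
    φ ∈ Γ ∨ φ.neg ∈ Γ := by
  by_contra hc
  push_neg at hc
  have h1 := hΓ.2 φ hc.1
  have h2 := hΓ.2 φ.neg hc.2
  rw [ConsistentSet, not_not] at h1 h2
  obtain ⟨L1, hL1, hp1⟩ := h1
  obtain ⟨L2, hL2, hp2⟩ := h2
  set L' : List (Form A AP) :=
    L1.filter (fun γ => γ ≠ φ) ++ L2.filter (fun γ => γ ≠ φ.neg) with hL'def
  have hL' : ∀ γ ∈ L', γ ∈ Γ := by
    intro γ hγ
    rcases List.mem_append.mp hγ with hg | hg
    · have := List.mem_filter.mp hg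
      rcases hL1 γ this.1 with h3 | h3
      · exact absurd h3 (by simpa using this.2)
      · exact h3
    · have := List.mem_filter.mp hg
      rcases hL2 γ this.1 with h3 | h3
      · exact absurd h3 (by simpa using this.2)
      · exact h3
  have htaut : IsTaut (((bigAnd L1).imp falsum).imp
      (((bigAnd L2).imp falsum).imp ((bigAnd L').imp falsum))) := by
    intro v hneg hand
    simp only [v_imp hneg hand, v_or hneg hand, v_verum hneg hand, v_falsum hneg hand, v_bigAnd hneg hand, hneg, hand]
    intro h1 h2 h3
    by_cases hvφ : v φ
    · apply h1
      intro γ hγ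
      by_cases hgφ : γ = φ
      · subst hgφ; exact hvφ
      · exact h3 γ (List.mem_append.mpr (Or.inl (List.mem_filter.mpr ⟨hγ, by simpa using hgφ⟩)))
    · apply h2
      intro γ hγ
      by_cases hgφ : γ = φ.neg
      · subst hgφ; exact (hneg φ).mpr hvφ
      · exact h3 γ (List.mem_append.mpr (Or.inr (List.mem_filter.mpr ⟨hγ, by simpa using hgφ⟩)))
  exact hΓ.1 ⟨L', hL', Prf.mp (Prf.mp (Prf.taut htaut) hp1) hp2⟩

lemma mcs_neg_iff {Γ : Set (Form A AP)} (hΓ : MaxConsistent SC Γ) (φ : Form A AP) :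
    φ.neg ∈ Γ ↔ φ ∉ Γ := by
  constructor
  · intro h1 h2
    apply mcs_falsum hΓ
    apply mcs_proves hΓ (L := [φ, φ.neg]) (by intro γ hγ; simp at hγ; rcases hγ with h|h <;> subst h <;> assumption)
    apply Prf.taut
    intro v hneg hand
    simp only [v_imp hneg hand, v_or hneg hand, v_verum hneg hand, v_falsum hneg hand, v_bigAnd hneg hand, hneg, hand]
    intro h3
    have := h3 φ (by simp)
    have := h3 φ.neg (by simp)
    rw [hneg] at this
    tauto
  · intro h1
    rcases mcs_em hΓ φ with h | h
    · exact absurd h h1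
    · exact h

lemma mcs_mp {Γ : Set (Form A AP)} (hΓ : MaxConsistent SC Γ) {φ ψ : Form A AP}
    (h1 : φ.imp ψ ∈ Γ) (h2 : φ ∈ Γ) : ψ ∈ Γ := by
  apply mcs_proves hΓ (L := [φ.imp ψ, φ])
    (by intro γ hγ; simp at hγ; rcases hγ with h|h <;> subst h <;> assumption)
  apply Prf.taut
  intro v hneg hand
  simp only [v_imp hneg hand, v_or hneg hand, v_verum hneg hand, v_falsum hneg hand, v_bigAnd hneg hand, hneg, hand]
  intro h3
  have ha := h3 (φ.imp ψ) (by simp)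
  have hb := h3 φ (by simp)
  rw [v_imp hneg hand] at ha
  exact ha hb

lemma mcs_and_intro {Γ : Set (Form A AP)} (hΓ : MaxConsistent SC Γ) {φ ψ : Form A AP}
    (h1 : φ ∈ Γ) (h2 : ψ ∈ Γ) : φ.and ψ ∈ Γ := by
  apply mcs_proves hΓ (L := [φ, ψ])
    (by intro γ hγ; simp at hγ; rcases hγ with h|h <;> subst h <;> assumption)
  apply Prf.taut
  intro v hneg hand
  simp only [v_imp hneg hand, v_or hneg hand, v_verum hneg hand, v_falsum hneg hand, v_bigAnd hneg hand, hneg, hand]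
  intro h3
  exact ⟨h3 φ (by simp), h3 ψ (by simp)⟩

lemma mcs_or_elim {Γ : Set (Form A AP)} (hΓ : MaxConsistent SC Γ) {φ ψ : Form A AP}
    (h1 : φ.or ψ ∈ Γ) : φ ∈ Γ ∨ ψ ∈ Γ := by
  by_contra hc
  push_neg at hc
  have hnφ := (mcs_neg_iff hΓ φ).mpr hc.1
  have hnψ := (mcs_neg_iff hΓ ψ).mpr hc.2
  apply mcs_falsum hΓ
  apply mcs_proves hΓ (L := [φ.or ψ, φ.neg, ψ.neg])
    (by intro γ hγ; simp at hγ; rcases hγ with h|h|h <;> subst h <;> assumption)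
  apply Prf.taut
  intro v hneg hand
  simp only [v_imp hneg hand, v_or hneg hand, v_verum hneg hand, v_falsum hneg hand, v_bigAnd hneg hand, hneg, hand]
  intro h3
  have ha := h3 (φ.or ψ) (by simp)
  have hb := h3 φ.neg (by simp)
  have hc' := h3 ψ.neg (by simp)
  rw [v_or hneg hand] at ha
  rw [hneg] at hb hc'
  tauto

lemma mcs_bigAnd_iff {Γ : Set (Form A AP)} (hΓ : MaxConsistent SC Γ)
    (L : List (Form A AP)) : bigAnd L ∈ Γ ↔ ∀ φ ∈ L, φ ∈ Γ := by
  induction L with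
  | nil =>
    simp only [Form.bigAnd, List.not_mem_nil, false_implies, implies_true, iff_true]
    apply mcs_closed hΓ
    exact Prf.taut (fun v hneg hand => ((v_verum hneg hand).mpr trivial))
  | cons x t ih =>
    simp only [Form.bigAnd, List.mem_cons]
    constructor
    · intro h1
      have h2 : x ∈ Γ ∧ bigAnd t ∈ Γ := by
        constructor
        · apply mcs_proves hΓ (L := [x.and (bigAnd t)]) (by simpa using h1)
          apply Prf.taut
          intro v hneg hand
          simp only [v_imp hneg hand, v_or hneg hand, v_verum hneg hand, v_falsum hneg hand, v_bigAnd hneg hand, hneg, hand]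
          intro h3
          have := h3 (x.and (bigAnd t)) (by simp)
          rw [hand] at this
          exact this.1
        · apply mcs_proves hΓ (L := [x.and (bigAnd t)]) (by simpa using h1)
          apply Prf.taut
          intro v hneg hand
          simp only [v_imp hneg hand, v_or hneg hand, v_verum hneg hand, v_falsum hneg hand, v_bigAnd hneg hand, hneg, hand]
          intro h3
          have := h3 (x.and (bigAnd t)) (by simp)
          rw [hand] at this
          exact (v_bigAnd hneg hand t).mp this.2
      intro φ hφ
      rcases hφ with h | h
      · subst h; exact h2.1
      · exact (ih.mp h2.2) φ h
    · intro h1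
      exact mcs_and_intro hΓ (h1 x (Or.inl rfl)) (ih.mpr (fun φ hφ => h1 φ (Or.inr hφ)))

lemma mcs_bigOr_elim {Γ : Set (Form A AP)} (hΓ : MaxConsistent SC Γ)
    {L : List (Form A AP)} (h1 : bigOr L ∈ Γ) : ∃ φ ∈ L, φ ∈ Γ := by
  induction L with
  | nil => exact absurd h1 (mcs_falsum hΓ)
  | cons x t ih =>
    rcases mcs_or_elim hΓ h1 with h | h
    · exact ⟨x, by simp, h⟩
    · obtain ⟨φ, hφ1, hφ2⟩ := ih h
      exact ⟨φ, by simp [hφ1], hφ2⟩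

end AuxMCS

section AuxCanon

open Form

variable {A AP : Type} [Fintype A] [Nonempty AP]

lemma sc_dk_imp {φ ψ : Form A AP} (B : Finset A) (hB : B.Nonempty)
    (h : SC (φ.imp ψ)) : SC ((dk B hB φ).imp (dk B hB ψ)) :=
  Prf.mp (Prf.axK B hB) (Prf.nec B hB h)

lemma mcs_dk_mp {Γ : Set (Form A AP)} (hΓ : MaxConsistent SC Γ) {φ ψ : Form A AP}
    {B : Finset A} {hB : B.Nonempty} (h : SC (φ.imp ψ)) (h1 : dk B hB φ ∈ Γ) :
    dk B hB ψ ∈ Γ :=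
  mcs_mp hΓ (mcs_closed hΓ (sc_dk_imp B hB h)) h1

lemma mcs_dk_and {Γ : Set (Form A AP)} (hΓ : MaxConsistent SC Γ) {φ ψ : Form A AP}
    {B : Finset A} {hB : B.Nonempty} (h1 : dk B hB φ ∈ Γ) (h2 : dk B hB ψ ∈ Γ) :
    dk B hB (φ.and ψ) ∈ Γ := by
  have ht : SC (φ.imp (ψ.imp (φ.and ψ))) := by
    apply Prf.taut
    intro v hneg hand
    simp only [v_imp hneg hand, hand]
    tauto
  have h3 : dk B hB (ψ.imp (φ.and ψ)) ∈ Γ := mcs_dk_mp hΓ ht h1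
  exact mcs_mp hΓ (mcs_mp hΓ (mcs_closed hΓ (Prf.axK B hB)) h3) h2

/-- The canonical relation. -/
abbrev crel (B : Finset A) (Γ Δ : {Γ : Set (Form A AP) // MaxConsistent SC Γ}) : Prop :=
  (canonicalPsm A AP SC).rel B Γ Δ

lemma crel_def {B : Finset A} {Γ Δ : {Γ : Set (Form A AP) // MaxConsistent SC Γ}} :
    crel B Γ Δ ↔ ∀ (hB : B.Nonempty) (φ : Form A AP), dk B hB φ ∈ Γ.1 → φ ∈ Δ.1 :=
  Iff.rfl

lemma crel_mono {B B' : Finset A} {Γ Δ : {Γ : Set (Form A AP) // MaxConsistent SC Γ}}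
    (hsub : B ⊆ B') (hr : crel B' Γ Δ) : crel B Γ Δ := by
  intro hB φ hφ
  have hB' : B'.Nonempty := hB.mono hsub
  exact hr hB' φ (mcs_mp Γ.2 (mcs_closed Γ.2 (Prf.axMono B B' hB hB' hsub)) hφ)

lemma crel_symm {B : Finset A} {Γ Δ : {Γ : Set (Form A AP) // MaxConsistent SC Γ}}
    (hr : crel B Γ Δ) : crel B Δ Γ := by
  intro hB φ hφ
  by_contra h0
  have hnφ : φ.neg ∈ Γ.1 := (mcs_neg_iff Γ.2 φ).mpr h0
  have hb : dk B hB ((dk B hB φ.neg.neg).neg) ∈ Γ.1 :=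
    mcs_mp Γ.2 (mcs_closed Γ.2 (Prf.axB (φ := φ.neg) B hB)) hnφ
  have h1 : (dk B hB φ.neg.neg).neg ∈ Δ.1 := hr hB _ hb
  have h2 : dk B hB φ.neg.neg ∈ Δ.1 := by
    apply mcs_dk_mp Δ.2 _ hφ
    apply Prf.taut
    intro v hneg hand
    simp only [v_imp hneg hand, hneg]
    tauto
  exact (mcs_neg_iff Δ.2 _).mp h1 h2

lemma crel_trans {B : Finset A} {Γ Δ Θ : {Γ : Set (Form A AP) // MaxConsistent SC Γ}}
    (h1 : crel B Γ Δ) (h2 : crel B Δ Θ) : crel B Γ Θ := by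
  intro hB φ hφ
  exact h2 hB φ (h1 hB _ (mcs_mp Γ.2 (mcs_closed Γ.2 (Prf.ax4 B hB)) hφ))

lemma crel_alive_refl {a : A} {Γ : {Γ : Set (Form A AP) // MaxConsistent SC Γ}}
    (h : aliveAgent a ∈ Γ.1) : crel {a} Γ Γ := by
  intro hB φ hdk
  by_contra h0
  have hnφ : φ.neg ∈ Γ.1 := (mcs_neg_iff Γ.2 φ).mpr h0
  have d1 : dk {a} hB φ.neg.neg ∈ Γ.1 := by
    apply mcs_dk_mp Γ.2 _ hdk
    apply Prf.taut
    intro v hneg hand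
    simp only [v_imp hneg hand, hneg]
    tauto
  have d2 : dk {a} hB (dk {a} hB φ.neg.neg) ∈ Γ.1 :=
    mcs_mp Γ.2 (mcs_closed Γ.2 (Prf.ax4 {a} hB)) d1
  have d3 : dk {a} hB ((dk {a} hB φ.neg.neg).neg) ∈ Γ.1 :=
    mcs_mp Γ.2 (mcs_closed Γ.2 (Prf.axB (φ := φ.neg) {a} hB)) hnφ
  have d4 : dk {a} hB ((dk {a} hB φ.neg.neg).and ((dk {a} hB φ.neg.neg).neg)) ∈ Γ.1 :=
    mcs_dk_and Γ.2 d2 d3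
  have d5 : dk {a} hB (falsum : Form A AP) ∈ Γ.1 := by
    apply mcs_dk_mp Γ.2 _ d4
    apply Prf.taut
    intro v hneg hand
    simp only [v_imp hneg hand, v_falsum hneg hand, hneg, hand]
    tauto
  have halive : (dk {a} hB (falsum : Form A AP)).neg ∈ Γ.1 := h
  exact (mcs_neg_iff Γ.2 _).mp halive d5

lemma crel_alive_of_refl {a : A} {Γ : {Γ : Set (Form A AP) // MaxConsistent SC Γ}}
    (h : crel {a} Γ Γ) : aliveAgent a ∈ Γ.1 := by
  rcases mcs_em Γ.2 (deadAgent a) with hd | hd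
  · exact absurd (h (Finset.singleton_nonempty a) falsum hd) (mcs_falsum Γ.2)
  · exact hd

lemma crel_selfL {B : Finset A} {Γ Δ : {Γ : Set (Form A AP) // MaxConsistent SC Γ}}
    (hr : crel B Γ Δ) : crel B Γ Γ := crel_trans hr (crel_symm hr)

lemma crel_aliveGrp {B : Finset A} (hB : B.Nonempty)
    {Γ Δ : {Γ : Set (Form A AP) // MaxConsistent SC Γ}}
    (hr : crel B Γ Δ) : aliveGrp B hB ∈ Γ.1 := by
  rcases mcs_em Γ.2 (dk B hB (falsum : Form A AP)) with hd | hd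
  · exact absurd (hr hB falsum hd) (mcs_falsum Δ.2)
  · exact hd

/-- Transfer of atoms along the canonical relation, using axiom `P`. -/
lemma crel_transfer {B : Finset A} (hB : B.Nonempty)
    {Γ Δ : {Γ : Set (Form A AP) // MaxConsistent SC Γ}}
    (hr : crel B Γ Δ) (hdΓ : deadGrp (A := A) (AP := AP) Bᶜ ∈ Γ.1)
    (hdΔ : deadGrp (A := A) (AP := AP) Bᶜ ∈ Δ.1)
    {p : AP} (hp : Form.atom p ∈ Γ.1) : Form.atom p ∈ Δ.1 := by
  have halive : aliveGrp B hB ∈ Γ.1 := crel_aliveGrp hB hr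
  have hX : ((aliveGrp B hB).and (deadGrp Bᶜ)).and (Form.atom p) ∈ Γ.1 :=
    mcs_and_intro Γ.2 (mcs_and_intro Γ.2 halive hdΓ) hp
  have h1 : dk B hB ((deadGrp Bᶜ).imp (Form.atom p)) ∈ Γ.1 :=
    mcs_mp Γ.2 (mcs_closed Γ.2 (Prf.axP B hB)) hX
  exact mcs_mp Δ.2 (hr hB _ h1) hdΔ

end AuxCanon

section AuxHist
set_option linter.unusedSectionVars false

open Form

variable {A AP : Type} [Fintype A] [Nonempty AP]

/-- Abbreviation for the canonical pseudo-model. -/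
local notation "Mc" => canonicalPsm A AP SC

/-- The endpoint of a list of steps starting at `w`. -/
def hl {W : Type} (w : W) (s : List (Finset A × W)) : W :=
  (s.map Prod.snd).getLastD w

lemma hl_nil {W : Type} (w : W) : hl (A := A) w [] = w := rfl

lemma hl_cons {W : Type} (w : W) (x : Finset A × W) (s : List (Finset A × W)) :
    hl w (x :: s) = hl x.2 s := by
  rw [hl, List.map_cons, List.getLastD_cons]
  rfl

lemma hl_append {W : Type} (s t : List (Finset A × W)) (w : W) :
    hl w (s ++ t) = hl (hl w s) t := by
  induction s generalizing w with
  | nil => simp [hl_nil]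
  | cons x s ih => simp only [List.cons_append, hl_cons, ih]

lemma hist_last_eq (h : Hist Mc) : h.last = hl h.first h.steps := rfl

lemma isHist_cons {W : Type} (M : PseudoData A AP W) (w : W) (x : Finset A × W)
    (t : List (Finset A × W)) :
    IsHist M w (x :: t) ↔ M.rel x.1 w x.2 ∧ IsHist M x.2 t := by
  obtain ⟨B, w'⟩ := x
  rfl

lemma isHist_append {W : Type} (M : PseudoData A AP W) (s t : List (Finset A × W)) (w : W) :
    IsHist M w (s ++ t) ↔ (IsHist M w s ∧ IsHist M (hl w s) t) := by
  induction s generalizing w with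
  | nil => simp [IsHist, hl_nil]
  | cons x s ih =>
    simp only [List.cons_append, isHist_cons, ih, hl_cons, and_assoc]

lemma step_rel {a : A} {x y : Hist Mc} (hs : histStep Mc a x y) :
    crel {a} x.last y.last := by
  obtain ⟨B, w, haB, hfirst, hsteps⟩ := hs
  have hv : IsHist Mc x.first (x.steps ++ [(B, w)]) := by
    rw [← hfirst, ← hsteps]; exact y.valid
  rw [isHist_append] at hv
  have h1 : crel B x.last w := by
    have := hv.2
    rw [isHist_cons] at this
    exact this.1
  have hlast : y.last = w := by
    rw [hist_last_eq, hsteps, hfirst, hl_append]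
    rfl
  rw [hlast]
  exact crel_mono (by simpa using haB) h1

lemma histRel_rel {a : A} {h g : Hist Mc} (hr : histRel Mc a h g) :
    crel {a} h.last g.last := by
  induction hr with
  | single e =>
    rcases e with e | e
    · exact step_rel e
    · exact crel_symm (step_rel e)
  | tail _ e ih =>
    rcases e with e | e
    · exact crel_trans ih (step_rel e)
    · exact crel_trans ih (crel_symm (step_rel e))

lemma alive_of_live {a : A} {h : Hist Mc} (hr : histRel Mc a h h) :
    aliveAgent a ∈ h.last.1 :=
  crel_alive_of_refl (histRel_rel hr)

lemma live_of_alive {a : A} {h : Hist Mc} (ha : aliveAgent a ∈ h.last.1) :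
    histRel Mc a h h := by
  have hr : crel {a} h.last h.last := crel_alive_refl ha
  have hv2 : IsHist Mc h.first (h.steps ++ [({a}, h.last)]) := by
    rw [isHist_append]
    refine ⟨h.valid, ?_⟩
    rw [isHist_cons]
    exact ⟨hr, trivial⟩
  set h2 : Hist Mc := ⟨h.first, h.steps ++ [({a}, h.last)], hv2⟩ with hh2
  have hstep : histStep Mc a h h2 :=
    ⟨{a}, h.last, Finset.mem_singleton_self a, rfl, rfl⟩
  exact Relation.TransGen.tail (Relation.TransGen.single (Or.inl hstep)) (Or.inr hstep)

/-- Chains of related worlds along a history, all of whose groups contain `B`. -/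
lemma chain_rel (B : Finset A) :
    ∀ (s : List (Finset A × {Γ : Set (Form A AP) // MaxConsistent SC Γ}))
      (w : {Γ : Set (Form A AP) // MaxConsistent SC Γ}),
      IsHist Mc w s → s ≠ [] → (∀ x ∈ s, B ⊆ x.1) → crel B w (hl w s) := by
  intro s
  induction s with
  | nil => intro w _ hne _; exact absurd rfl hne
  | cons x t ih =>
    intro w hv _ hsub
    rw [isHist_cons] at hv
    have r1 : crel B w x.2 := crel_mono (hsub x (by simp)) hv.1
    rw [hl_cons]
    by_cases ht : t = []
    · subst ht; exact r1
    · exact crel_trans r1 (ih x.2 hv.2 ht (fun y hy => hsub y (by simp [hy])))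

/-- The statement of the "common prefix" property for two histories. -/
def GoodAt (a : A) (h g : Hist Mc) (n : ℕ) : Prop :=
  n ≤ h.steps.length ∧ n ≤ g.steps.length ∧
    h.steps.take n = g.steps.take n ∧
    (∀ x ∈ h.steps.drop n, a ∈ x.1) ∧ (∀ x ∈ g.steps.drop n, a ∈ x.1)

lemma goodAt_symm {a : A} {h g : Hist Mc} {n : ℕ} (hg : GoodAt a h g n) :
    GoodAt a g h n :=
  ⟨hg.2.1, hg.1, hg.2.2.1.symm, hg.2.2.2.2, hg.2.2.2.1⟩

lemma goodAt_step {a : A} {x y : Hist Mc} (hs : histStep Mc a x y) :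
    x.first = y.first ∧ GoodAt a x y x.steps.length := by
  obtain ⟨B, w, haB, hfirst, hsteps⟩ := hs
  refine ⟨hfirst.symm, ?_, ?_, ?_, ?_, ?_⟩
  · exact le_refl _
  · rw [hsteps, List.length_append]; omega
  · rw [hsteps, List.take_length, List.take_left]
  · rw [List.drop_length]; intro x hx; simp at hx
  · rw [hsteps, List.drop_left]
    intro z hz
    simp at hz
    rw [hz]
    exact haB

lemma goodAt_tail {a : A} {h b c : Hist Mc} {n : ℕ}
    (hfb : h.first = b.first) (hg : GoodAt a h b n)
    (e : histStep Mc a b c ∨ histStep Mc a c b) :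
    h.first = c.first ∧ ∃ m, GoodAt a h c m := by
  obtain ⟨hn1, hn2, htk, hd1, hd2⟩ := hg
  rcases e with e | e
  · -- c = b ++ [ev]
    obtain ⟨B, w, haB, hfirst, hsteps⟩ := e
    refine ⟨hfb.trans hfirst.symm, n, hn1, ?_, ?_, hd1, ?_⟩
    · rw [hsteps, List.length_append]; omega
    · rw [hsteps, List.take_append_of_le_length hn2, htk]
    · rw [hsteps, List.drop_append_of_le_length hn2]
      intro z hz
      rcases List.mem_append.mp hz with hz | hz
      · exact hd2 z hz
      · simp at hz; rw [hz]; exact haB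
  · -- b = c ++ [ev]
    obtain ⟨B, w, haB, hfirst, hsteps⟩ := e
    have hfc : h.first = c.first := hfb.trans hfirst
    by_cases hnc : n ≤ c.steps.length
    · refine ⟨hfc, n, hn1, hnc, ?_, hd1, ?_⟩
      · rw [htk, hsteps, List.take_append_of_le_length hnc]
      · intro z hz
        apply hd2
        rw [hsteps, List.drop_append_of_le_length hnc]
        exact List.mem_append.mpr (Or.inl hz)
    · -- n = c.steps.length + 1
      have hneq : n = c.steps.length + 1 := by
        have : b.steps.length = c.steps.length + 1 := by
          rw [hsteps, List.length_append]; rfl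
        omega
      have htkh : h.steps.take n = c.steps ++ [(B, w)] := by
        rw [htk, hsteps]
        exact List.take_of_length_le (by simp; omega)
      have hdecomp : h.steps = (c.steps ++ [(B, w)]) ++ h.steps.drop n := by
        conv_lhs => rw [← List.take_append_drop n h.steps]
        rw [htkh]
      have hlen2 : c.steps.length ≤ (c.steps ++ [(B, w)]).length := by simp
      refine ⟨hfc, c.steps.length, by omega, le_refl _, ?_, ?_, ?_⟩
      · conv_lhs => rw [hdecomp]
        rw [List.take_append_of_le_length hlen2,
          List.take_append_of_le_length (le_refl _)]
      · intro z hz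
        conv at hz => rw [hdecomp]
        rw [List.drop_append_of_le_length hlen2,
          List.drop_append_of_le_length (le_refl _), List.drop_length] at hz
        simp only [List.nil_append, List.cons_append, List.mem_cons,
          List.mem_append] at hz
        rcases hz with hz | hz
        · rw [hz]; exact haB
        · exact hd1 z hz
      · rw [List.drop_length]; intro z hz; simp at hz

end AuxHist

section AuxGood

open Form

variable {A AP : Type} [Fintype A] [Nonempty AP]

lemma good {a : A} {h g : Hist (canonicalPsm A AP SC)}
    (hr : histRel (canonicalPsm A AP SC) a h g) :
    h.first = g.first ∧ ∃ n, GoodAt a h g n := by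
  induction hr with
  | single e =>
    rcases e with e | e
    · obtain ⟨hf, hg⟩ := goodAt_step e
      exact ⟨hf, _, hg⟩
    · obtain ⟨hf, hg⟩ := goodAt_step e
      exact ⟨hf.symm, _, goodAt_symm hg⟩
  | tail _ e ih =>
    obtain ⟨hf, n, hg⟩ := ih
    exact goodAt_tail hf hg e

end AuxGood

/-- Equivalent histories of the unravelled canonical model have the same
labelling: in `U(Mc)`, if `h ≡ h'` then `L^U(h) = L^U(h')`. -/
theorem equiv_histories_same_label (A AP : Type) [Fintype A] [Nonempty AP]
    (h h' : Hist (canonicalPsm A AP SC))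
    (heq : pequiv (unravel (canonicalPsm A AP SC)) h h') :
    (unravel (canonicalPsm A AP SC)).label h
      = (unravel (canonicalPsm A AP SC)).label h' := by
  classical
  obtain ⟨hlive, hrelall⟩ := heq
  set Bf : Finset A :=
    Finset.univ.filter (fun a => histRel (canonicalPsm A AP SC) a h h) with hBf
  have hmemBf : ∀ a, a ∈ Bf ↔ histRel (canonicalPsm A AP SC) a h h := by
    intro a; simp [hBf]
  -- Bf is nonempty (axiom NE)
  have hBfne : Bf.Nonempty := by
    have hne' : Form.bigOr (((Finset.univ : Finset A)).toList.map Form.aliveAgent)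
        ∈ h.last.1 := mcs_closed h.last.2 Prf.axNE
    obtain ⟨φ, hφmem, hφΓ⟩ := mcs_bigOr_elim h.last.2 hne'
    rw [List.mem_map] at hφmem
    obtain ⟨a, _, rfl⟩ := hφmem
    exact ⟨a, (hmemBf a).mpr (live_of_alive hφΓ)⟩
  have hrel' : ∀ a ∈ Bf, histRel (canonicalPsm A AP SC) a h h' := by
    intro a ha
    exact hrelall a ((hmemBf a).mp ha)
  have hgood : ∀ a ∈ Bf, ∃ n, GoodAt a h h' n := fun a ha => (good (hrel' a ha)).2
  have hfirst : h.first = h'.first :=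
    (good (hrel' hBfne.choose hBfne.choose_spec)).1
  choose! f hf using hgood
  obtain ⟨a0, ha0, hmax⟩ := Finset.exists_max_image Bf f hBfne
  set N := f a0 with hNdef
  have hN1 : N ≤ h.steps.length := (hf a0 ha0).1
  have hN2 : N ≤ h'.steps.length := (hf a0 ha0).2.1
  have htke : h.steps.take N = h'.steps.take N := (hf a0 ha0).2.2.1
  have hdropsub : ∀ x ∈ h.steps.drop N, Bf ⊆ x.1 := by
    intro x hx b hb
    have hdd : h.steps.drop N = (h.steps.drop (f b)).drop (N - f b) := by
      rw [List.drop_drop]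
      congr 1
      have := hmax b hb
      omega
    rw [hdd] at hx
    exact (hf b hb).2.2.2.1 x (List.mem_of_mem_drop hx)
  have hdropsub' : ∀ x ∈ h'.steps.drop N, Bf ⊆ x.1 := by
    intro x hx b hb
    have hdd : h'.steps.drop N = (h'.steps.drop (f b)).drop (N - f b) := by
      rw [List.drop_drop]
      congr 1
      have := hmax b hb
      omega
    rw [hdd] at hx
    exact (hf b hb).2.2.2.2 x (List.mem_of_mem_drop hx)
  set mid := hl h.first (h.steps.take N) with hmiddef
  have hmid' : hl h'.first (h'.steps.take N) = mid := by
    rw [hmiddef, ← htke, ← hfirst]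
  have hvh : IsHist (canonicalPsm A AP SC) mid (h.steps.drop N) := by
    have h0 : IsHist (canonicalPsm A AP SC) h.first
        (h.steps.take N ++ h.steps.drop N) := by
      rw [List.take_append_drop]; exact h.valid
    exact ((isHist_append _ _ _ _).mp h0).2
  have hvh' : IsHist (canonicalPsm A AP SC) mid (h'.steps.drop N) := by
    have h0 : IsHist (canonicalPsm A AP SC) h'.first
        (h'.steps.take N ++ h'.steps.drop N) := by
      rw [List.take_append_drop]; exact h'.valid
    have := ((isHist_append _ _ _ _).mp h0).2
    rwa [hmid'] at this
  have hlast : h.last = hl mid (h.steps.drop N) := by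
    rw [hist_last_eq]
    conv_lhs => rw [← List.take_append_drop N h.steps]
    rw [hl_append]
  have hlast' : h'.last = hl mid (h'.steps.drop N) := by
    rw [hist_last_eq]
    conv_lhs => rw [← List.take_append_drop N h'.steps]
    rw [hl_append, hmid']
  -- either the two histories coincide, or their lasts are `Bf`-related
  have hkey : h.last = h'.last ∨ crel Bf h.last h'.last := by
    by_cases hd : h.steps.drop N = []
    · by_cases hd' : h'.steps.drop N = []
      · left
        have e1 : h.steps = h.steps.take N := by
          conv_lhs => rw [← List.take_append_drop N h.steps]
          rw [hd, List.append_nil]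
        have e2 : h'.steps = h'.steps.take N := by
          conv_lhs => rw [← List.take_append_drop N h'.steps]
          rw [hd', List.append_nil]
        rw [hist_last_eq, hist_last_eq, hfirst, e1, e2, htke]
      · right
        have r2 : crel Bf mid h'.last := by
          rw [hlast']
          exact chain_rel Bf _ mid hvh' hd' hdropsub'
        have hmideq : h.last = mid := by rw [hlast, hd]; rfl
        rw [hmideq]
        exact r2
    · have r1 : crel Bf mid h.last := by
        rw [hlast]
        exact chain_rel Bf _ mid hvh hd hdropsub
      right
      by_cases hd' : h'.steps.drop N = []
      · have hmideq : h'.last = mid := by rw [hlast', hd']; rfl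
        rw [hmideq]
        exact crel_symm r1
      · have r2 : crel Bf mid h'.last := by
          rw [hlast']
          exact chain_rel Bf _ mid hvh' hd' hdropsub'
        exact crel_trans (crel_symm r1) r2
  rcases hkey with hkey | hkey
  · show (canonicalPsm A AP SC).label h.last = (canonicalPsm A AP SC).label h'.last
    rw [hkey]
  · -- dead groups at both endpoints
    have hdeadΓ : Form.deadGrp (A := A) (AP := AP) Bfᶜ ∈ h.last.1 := by
      apply (mcs_bigAnd_iff h.last.2 _).mpr
      intro φ hφ
      rw [List.mem_map] at hφ
      obtain ⟨c, hc1, rfl⟩ := hφ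
      have hc2 : c ∉ Bf := Finset.mem_compl.mp (Finset.mem_toList.mp hc1)
      rcases mcs_em h.last.2 (Form.deadAgent c) with hdc | hdc
      · exact hdc
      · exact absurd ((hmemBf c).mpr (live_of_alive hdc)) hc2
    have hdeadΔ : Form.deadGrp (A := A) (AP := AP) Bfᶜ ∈ h'.last.1 := by
      apply (mcs_bigAnd_iff h'.last.2 _).mpr
      intro φ hφ
      rw [List.mem_map] at hφ
      obtain ⟨c, hc1, rfl⟩ := hφ
      have hc2 : c ∉ Bf := Finset.mem_compl.mp (Finset.mem_toList.mp hc1)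
      rcases mcs_em h'.last.2 (Form.deadAgent c) with hdc | hdc
      · exact hdc
      · exfalso
        apply hc2
        apply (hmemBf c).mpr
        have hmem : c ∈ PEData.live (unravel (canonicalPsm A AP SC)) h' :=
          live_of_alive hdc
        rw [← hlive] at hmem
        exact hmem
    apply Set.ext
    intro p
    constructor
    · intro hp
      exact crel_transfer hBfne hkey hdeadΓ hdeadΔ hp
    · intro hp
      exact crel_transfer hBfne (crel_symm hkey) hdeadΔ hdeadΓ hp
end
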